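/- For m,n ≥ 3, the number of distinct quartics occurring in the Fibonacci array f_{m,n} equals D(m)·D(n), where the count of distinct quartics is the sum over all sizes (2r,2l) with r,l ≥ 1 of the number of distinct 2r × 2l arrays X such that X occurs as a subarray of f_{m,n} and the four r × l quadrant blocks of X are all equal, and D(k) is the number of distinct squares that are factors of the 1D Fibonacci word f_k. Consequently the numbers of distinct Type II(a) tandems and of distinct Type II(b) tandems in f_{m,n} also equal D(m)·D(n). -/

import Mathlib

/-!
The Fibonacci array is the outer product of two Fibonacci words: its entry at `(i, j)` is the
pair `(f_m[i], f_n[j])`. An `r × l` window at `(i, j)` is therefore determined by the factor of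
`f_m` of length `r` at `i` and the factor of `f_n` of length `l` at `j`, and each of the three
repetition conditions (four equal quadrants, or either kind of tandem) holds exactly when `f_m`
has a square of half-length `r` at `i` and `f_n` one of half-length `l` at `j`. The arrays
counted are thus in bijection with pairs `(x, y)` such that `xx` occurs in `f_m` and `yy` in `f_n`.
-/

/-- Fibonacci numbers: F(0)=1, F(1)=1, F(n+2)=F(n+1)+F(n). -/
def F : ℕ → ℕ
  | 0 => 1
  | 1 => 1
  | n + 2 => F (n + 1) + F n

/-- Finite Fibonacci words over {a,b} coded as Fin 2 (a=0, b=1). -/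
def fibWord : ℕ → List (Fin 2)
  | 0 => [0]
  | 1 => [1]
  | n + 2 => fibWord (n + 1) ++ fibWord n

/-- The Fibonacci arrays f_{m,n} over {a,b,c,d} coded as Fin 2 × Fin 2,
with a=(0,0), b=(0,1), c=(1,0), d=(1,1); `fibArr m n i j` is the (i,j) entry
(0-indexed, only indices i < F m, j < F n are meaningful). -/
def fibArr : ℕ → ℕ → ℕ → ℕ → Fin 2 × Fin 2
  | 0, 0, _, _ => (0, 0)
  | 0, 1, _, _ => (0, 1)
  | 1, 0, _, _ => (1, 0)
  | 1, 1, _, _ => (1, 1)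
  | 0, n + 2, i, j =>
      if j < F (n + 1) then fibArr 0 (n + 1) i j else fibArr 0 n i (j - F (n + 1))
  | 1, n + 2, i, j =>
      if j < F (n + 1) then fibArr 1 (n + 1) i j else fibArr 1 n i (j - F (n + 1))
  | m + 2, k, i, j =>
      if i < F (m + 1) then fibArr (m + 1) k i j else fibArr m k (i - F (m + 1)) j
  termination_by m n => (m, n)

/-- The r × l subarray of u with top-left entry at (i,j). -/
def subarr (u : ℕ → ℕ → Fin 2 × Fin 2) (i j r l : ℕ) : Fin r × Fin l → Fin 2 × Fin 2 :=
  fun p => u (i + p.1.val) (j + p.2.val)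

/-- Number of square occurrences in a finite word. -/
noncomputable def sqOcc (w : List (Fin 2)) : ℕ :=
  {p : ℕ × ℕ | 1 ≤ p.2 ∧ p.1 + 2 * p.2 ≤ w.length ∧
    ∀ t < p.2, w.getD (p.1 + t) 0 = w.getD (p.1 + p.2 + t) 0}.ncard

/-- R(n): number of square occurrences in f_n. -/
noncomputable def R (n : ℕ) : ℕ := sqOcc (fibWord n)

/-- Number of distinct nonempty factors of a word. -/
noncomputable def pFact (w : List (Fin 2)) : ℕ :=
  {v : List (Fin 2) | v ≠ [] ∧ v <:+: w}.ncard

/-- D(n): number of distinct (nonempty) squares xx occurring as factors of f_n. -/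
noncomputable def D (n : ℕ) : ℕ :=
  {x : List (Fin 2) | x ≠ [] ∧ x ++ x <:+: fibWord n}.ncard

/-- The r × c array X occurs as a subarray of the Fibonacci array f_{m,n}. -/
def occursIn (m n r c : ℕ) (X : Fin r × Fin c → Fin 2 × Fin 2) : Prop :=
  ∃ i j, i + r ≤ F m ∧ j + c ≤ F n ∧
    ∀ p : Fin r × Fin c, X p = fibArr m n (i + p.1.val) (j + p.2.val)

namespace List

variable {α : Type*}

theorem IsPrefix.getD_eq {l₁ l₂ : List α} (h : l₁ <+: l₂) (d : α) {i : ℕ} (hi : i < l₁.length) :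
    l₁.getD i d = l₂.getD i d := by
  rw [getD_eq_getElem _ _ hi, getD_eq_getElem _ _ (hi.trans_le h.length_le), h.getElem]

theorem getD_drop (l : List α) (d : α) (i j : ℕ) : (l.drop i).getD j d = l.getD (i + j) d := by
  simp only [getD_eq_getElem?_getD, getElem?_drop]

theorem ext_getD (d : α) {l₁ l₂ : List α} (hlen : l₁.length = l₂.length)
    (h : ∀ t < l₁.length, l₁.getD t d = l₂.getD t d) : l₁ = l₂ :=
  ext_getElem hlen fun t h₁ h₂ => by
    simpa only [getD_eq_getElem _ _ h₁, getD_eq_getElem _ _ h₂] using h t h₁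

theorem infix_iff_exists_prefix_drop {l₁ l₂ : List α} : l₁ <:+: l₂ ↔ ∃ i, l₁ <+: l₂.drop i := by
  constructor
  · rintro ⟨s, t, rfl⟩
    exact ⟨s.length, by simp⟩
  · rintro ⟨i, h⟩
    exact h.isInfix.trans (drop_suffix i l₂).isInfix

def HasSquarePrefix (a : List α) (r : ℕ) : Prop :=
  ∃ x : List α, x.length = r ∧ x ++ x <+: a

theorem hasSquarePrefix_iff_getD (d : α) {a : List α} {r : ℕ} :
    a.HasSquarePrefix r ↔ 2 * r ≤ a.length ∧ ∀ t < r, a.getD t d = a.getD (r + t) d := by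
  constructor
  · rintro ⟨x, rfl, h⟩
    have hlen := h.length_le
    rw [length_append] at hlen
    refine ⟨by omega, fun t ht => ?_⟩
    rw [← h.getD_eq d (by simp; omega), ← h.getD_eq d (by simp; omega),
      getD_append _ _ _ _ ht, getD_append_right _ _ _ _ (by omega), Nat.add_sub_cancel_left]
  · rintro ⟨hlen, hper⟩
    refine ⟨a.take r, by simp; omega, ?_⟩
    have hroot : (a.drop r).take r = a.take r := by
      refine ext_getD d (by simp only [length_take, length_drop]; omega) fun t ht => ?_
      have htr : t < r := ht.trans_le (length_take_le _ _)
      rw [(take_prefix r _).getD_eq d ht, getD_drop,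
        (take_prefix r a).getD_eq d (by simp only [length_take]; omega), hper t htr]
    rw [show a.take r ++ a.take r = a.take (r + r) by rw [take_add, hroot]]
    exact take_prefix _ _

def squareRoots (w : List α) : Set (List α) :=
  {x | x ≠ [] ∧ x ++ x <:+: w}

end List

section SquareWindows

open List

variable {α β : Type*} {γ : ℕ → ℕ → Type*}

def squareWindows (E : List α → List β → (r l : ℕ) → γ r l) (u : List α) (v : List β) :
    Set ((r : ℕ) × (l : ℕ) × γ r l) :=
  {s | 1 ≤ s.1 ∧ 1 ≤ s.2.1 ∧ ∃ i j, (u.drop i).HasSquarePrefix s.1 ∧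
    (v.drop j).HasSquarePrefix s.2.1 ∧ s.2.2 = E (u.drop i) (v.drop j) s.1 s.2.1}

def squareArray (E : List α → List β → (r l : ℕ) → γ r l) (x : List α) (y : List β) :
    (r : ℕ) × (l : ℕ) × γ r l :=
  ⟨x.length, y.length, E (x ++ x) (y ++ y) x.length y.length⟩

variable (E : List α → List β → (r l : ℕ) → γ r l)

theorem squareWindows_eq_image
    (hE_prefix : ∀ {x a y b}, x ++ x <+: a → y ++ y <+: b →
      E a b x.length y.length = E (x ++ x) (y ++ y) x.length y.length)
    (u : List α) (v : List β) :
    squareWindows E u v = (fun p => squareArray E p.1 p.2) '' (u.squareRoots ×ˢ v.squareRoots) := by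
  ext ⟨r, l, X⟩
  simp only [squareWindows, Set.mem_ofPred_eq]
  constructor
  · rintro ⟨hr, hl, i, j, ⟨x, rfl, hx⟩, ⟨y, rfl, hy⟩, rfl⟩
    refine ⟨(x, y), ⟨⟨ne_nil_of_length_pos hr, infix_iff_exists_prefix_drop.2 ⟨i, hx⟩⟩,
      ne_nil_of_length_pos hl, infix_iff_exists_prefix_drop.2 ⟨j, hy⟩⟩, ?_⟩
    simp only [squareArray, hE_prefix hx hy]
  · rintro ⟨⟨x, y⟩, ⟨⟨hx₀, hx⟩, hy₀, hy⟩, h⟩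
    cases h
    obtain ⟨i, hx⟩ := infix_iff_exists_prefix_drop.1 hx
    obtain ⟨j, hy⟩ := infix_iff_exists_prefix_drop.1 hy
    exact ⟨length_pos_iff.2 hx₀, length_pos_iff.2 hy₀, i, j, ⟨x, rfl, hx⟩, ⟨y, rfl, hy⟩,
      (hE_prefix hx hy).symm⟩

theorem injOn_squareArray
    (hE_inj : ∀ {x x' y y'}, x ≠ [] → y ≠ [] → x.length = x'.length → y.length = y'.length →
      E (x ++ x) (y ++ y) x.length y.length = E (x' ++ x') (y' ++ y') x.length y.length →
      x = x' ∧ y = y')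
    (u : List α) (v : List β) :
    Set.InjOn (fun p => squareArray E p.1 p.2) (u.squareRoots ×ˢ v.squareRoots) := by
  rintro ⟨x, y⟩ ⟨⟨hx, -⟩, hy, -⟩ ⟨x', y'⟩ - h
  have hxlen : x.length = x'.length := congrArg Sigma.fst h
  have hylen : y.length = y'.length := congrArg (fun s => s.2.1) h
  simp only [squareArray] at h
  rw [← hxlen, ← hylen] at h
  simp only [Sigma.mk.inj_iff, heq_eq_eq, true_and] at h
  exact Prod.ext_iff.2 (hE_inj hx hy hxlen hylen h)

theorem ncard_squareWindows
    (hE_prefix : ∀ {x a y b}, x ++ x <+: a → y ++ y <+: b →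
      E a b x.length y.length = E (x ++ x) (y ++ y) x.length y.length)
    (hE_inj : ∀ {x x' y y'}, x ≠ [] → y ≠ [] → x.length = x'.length → y.length = y'.length →
      E (x ++ x) (y ++ y) x.length y.length = E (x' ++ x') (y' ++ y') x.length y.length →
      x = x' ∧ y = y')
    (u : List α) (v : List β) :
    (squareWindows E u v).ncard = u.squareRoots.ncard * v.squareRoots.ncard := by
  rw [squareWindows_eq_image E hE_prefix, (injOn_squareArray E hE_inj u v).ncard_image,
    Set.ncard_prod]

end SquareWindows

section Arrays

open List

def outerArr (a b : List (Fin 2)) (r l : ℕ) : Fin r × Fin l → Fin 2 × Fin 2 :=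
  fun p => (a.getD p.1 0, b.getD p.2 0)

def IsQuartic {γ : Type*} {r l : ℕ} (X : Fin (2 * r) × Fin (2 * l) → γ) : Prop :=
  ∀ (p : Fin r) (q : Fin l),
    X (⟨p.val, by omega⟩, ⟨q.val, by omega⟩) = X (⟨p.val, by omega⟩, ⟨q.val + l, by omega⟩) ∧
    X (⟨p.val, by omega⟩, ⟨q.val, by omega⟩) = X (⟨p.val + r, by omega⟩, ⟨q.val, by omega⟩) ∧
    X (⟨p.val, by omega⟩, ⟨q.val, by omega⟩) = X (⟨p.val + r, by omega⟩, ⟨q.val + l, by omega⟩)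

variable {a a' b b' : List (Fin 2)} {r l : ℕ}

theorem subarr_eq_outerArr {A : ℕ → ℕ → Fin 2 × Fin 2} {u v : List (Fin 2)}
    (hA : ∀ i < u.length, ∀ j < v.length, A i j = (u.getD i 0, v.getD j 0)) {i j : ℕ}
    (hi : i + r ≤ u.length) (hj : j + l ≤ v.length) :
    subarr A i j r l = outerArr (u.drop i) (v.drop j) r l := by
  funext p
  simp only [subarr, outerArr, getD_drop]
  exact hA _ (by omega) _ (by omega)

theorem outerArr_congr (ha : ∀ t < r, a.getD t 0 = a'.getD t 0)
    (hb : ∀ t < l, b.getD t 0 = b'.getD t 0) : outerArr a b r l = outerArr a' b' r l :=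
  funext fun p => Prod.ext (ha p.1 p.1.2) (hb p.2 p.2.2)

theorem outerArr_eq_of_prefix (ha : a' <+: a) (hb : b' <+: b) (hr : r ≤ a'.length)
    (hl : l ≤ b'.length) : outerArr a b r l = outerArr a' b' r l :=
  outerArr_congr (fun _ ht => (ha.getD_eq 0 (ht.trans_le hr)).symm)
    (fun _ ht => (hb.getD_eq 0 (ht.trans_le hl)).symm)

theorem outerArr_eq_outerArr_iff (hr : 0 < r) (hl : 0 < l) :
    outerArr a b r l = outerArr a' b' r l ↔
      (∀ t < r, a.getD t 0 = a'.getD t 0) ∧ ∀ t < l, b.getD t 0 = b'.getD t 0 := by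
  refine ⟨fun h => ⟨fun t ht => ?_, fun t ht => ?_⟩, fun h => outerArr_congr h.1 h.2⟩
  · exact congrArg Prod.fst (congrFun h (⟨t, ht⟩, ⟨0, hl⟩))
  · exact congrArg Prod.snd (congrFun h (⟨0, hr⟩, ⟨t, ht⟩))

theorem isQuartic_outerArr_iff (hr : 0 < r) (hl : 0 < l) :
    IsQuartic (outerArr a b (2 * r) (2 * l)) ↔
      (∀ t < r, a.getD t 0 = a.getD (r + t) 0) ∧ ∀ t < l, b.getD t 0 = b.getD (l + t) 0 := by
  simp only [IsQuartic, outerArr, Prod.ext_iff, Fin.forall_iff, Nat.add_comm _ r, Nat.add_comm _ l]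
  exact ⟨fun h => ⟨fun t ht => (h t ht 0 hl).2.1.1, fun t ht => (h 0 hr t ht).1.2⟩,
    fun h p hp q hq => ⟨⟨trivial, h.2 q hq⟩, ⟨h.1 p hp, trivial⟩, ⟨h.1 p hp, h.2 q hq⟩⟩⟩

theorem outerArr_eq_outerArr_drop_iff (hr : 0 < r) (hl : 0 < l) :
    outerArr a b r l = outerArr (a.drop r) (b.drop l) r l ↔
      (∀ t < r, a.getD t 0 = a.getD (r + t) 0) ∧ ∀ t < l, b.getD t 0 = b.getD (l + t) 0 := by
  simp only [outerArr_eq_outerArr_iff hr hl, getD_drop]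

theorem outerArr_drop_right_eq_outerArr_drop_left_iff (hr : 0 < r) (hl : 0 < l) :
    outerArr a (b.drop l) r l = outerArr (a.drop r) b r l ↔
      (∀ t < r, a.getD t 0 = a.getD (r + t) 0) ∧ ∀ t < l, b.getD t 0 = b.getD (l + t) 0 := by
  simp only [outerArr_eq_outerArr_iff hr hl, getD_drop, eq_comm (a := b.getD (l + _) 0)]

theorem eq_of_outerArr_append_self_eq {x x' y y' : List (Fin 2)} (hx : x ≠ []) (hy : y ≠ [])
    (hxlen : x.length = x'.length) (hylen : y.length = y'.length)
    (hr : x.length ≤ r) (hl : y.length ≤ l)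
    (h : outerArr (x ++ x) (y ++ y) r l = outerArr (x' ++ x') (y' ++ y') r l) :
    x = x' ∧ y = y' := by
  have hx₀ := length_pos_iff.2 hx
  have hy₀ := length_pos_iff.2 hy
  rw [outerArr_eq_outerArr_iff (by omega) (by omega)] at h
  refine ⟨ext_getD 0 hxlen fun t ht => ?_, ext_getD 0 hylen fun t ht => ?_⟩
  · simpa only [getD_append _ _ _ _ ht, getD_append _ _ _ _ (hxlen ▸ ht)] using h.1 t (by omega)
  · simpa only [getD_append _ _ _ _ ht, getD_append _ _ _ _ (hylen ▸ ht)] using h.2 t (by omega)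

end Arrays

section Fibonacci

open List

theorem fibWord_length : ∀ n, (fibWord n).length = F n
  | 0 => rfl
  | 1 => rfl
  | n + 2 => by rw [fibWord, F, length_append, fibWord_length (n + 1), fibWord_length n]

theorem getD_fibWord_of_lt_two {k i : ℕ} (hk : k < 2) (hi : i < F k) :
    (fibWord k).getD i 0 = ⟨k, hk⟩ := by
  interval_cases k <;> simp only [F, Nat.lt_one_iff] at hi <;> simp [fibWord, hi]

theorem getD_fibWord_add_two (n j : ℕ) :
    (fibWord (n + 2)).getD j 0 =
      if j < F (n + 1) then (fibWord (n + 1)).getD j 0 else (fibWord n).getD (j - F (n + 1)) 0 := by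
  rw [fibWord, ← fibWord_length]
  split_ifs with h
  · exact getD_append _ _ _ _ h
  · exact getD_append_right _ _ _ _ (not_lt.1 h)

theorem fibArr_eq_getD : ∀ m n i j, i < F m → j < F n →
    fibArr m n i j = ((fibWord m).getD i 0, (fibWord n).getD j 0)
  | 0, 0, i, j, hi, hj | 0, 1, i, j, hi, hj | 1, 0, i, j, hi, hj | 1, 1, i, j, hi, hj => by
      rw [fibArr, getD_fibWord_of_lt_two (by norm_num) hi, getD_fibWord_of_lt_two (by norm_num) hj]
      rfl
  | 0, n + 2, i, j, hi, hj | 1, n + 2, i, j, hi, hj => by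
      rw [fibArr, getD_fibWord_add_two]
      split_ifs with h
      · exact fibArr_eq_getD _ _ _ _ hi h
      · exact fibArr_eq_getD _ _ _ _ hi (by simp only [F] at hj; omega)
  | m + 2, k, i, j, hi, hj => by
      rw [fibArr, getD_fibWord_add_two]
      split_ifs with h
      · exact fibArr_eq_getD _ _ _ _ h hj
      · exact fibArr_eq_getD _ _ _ _ (by simp only [F] at hi; omega) hj
  termination_by m n => (m, n)

end Fibonacci

section Counting

open List

variable {A : ℕ → ℕ → Fin 2 × Fin 2} {u v : List (Fin 2)}

theorem ncard_quartics
    (hA : ∀ i < u.length, ∀ j < v.length, A i j = (u.getD i 0, v.getD j 0)) :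
    {x : (r : ℕ) × (l : ℕ) × (Fin (2 * r) × Fin (2 * l) → Fin 2 × Fin 2) |
      1 ≤ x.1 ∧ 1 ≤ x.2.1 ∧
      (∃ i j, i + 2 * x.1 ≤ u.length ∧ j + 2 * x.2.1 ≤ v.length ∧
        ∀ p, x.2.2 p = A (i + p.1.val) (j + p.2.val)) ∧
      IsQuartic x.2.2}.ncard = u.squareRoots.ncard * v.squareRoots.ncard := by
  rw [← ncard_squareWindows (fun a b r l => outerArr a b (2 * r) (2 * l))
    (fun hx hy => outerArr_eq_of_prefix hx hy
      (by simp only [length_append]; omega) (by simp only [length_append]; omega))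
    (fun hx hy hxlen hylen =>
      eq_of_outerArr_append_self_eq hx hy hxlen hylen (by omega) (by omega))]
  congr 1
  ext ⟨r, l, X⟩
  simp only [squareWindows, Set.mem_ofPred_eq, hasSquarePrefix_iff_getD (0 : Fin 2), length_drop,
    ← exists_and_right]
  refine and_congr_right fun hr => and_congr_right fun hl => exists₂_congr fun i j => ?_
  constructor
  · rintro ⟨⟨hi, hj, hX⟩, hQ⟩
    obtain rfl : X = outerArr (u.drop i) (v.drop j) (2 * r) (2 * l) :=
      (funext hX).trans (subarr_eq_outerArr hA hi hj)
    rw [isQuartic_outerArr_iff hr hl] at hQ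
    exact ⟨⟨by omega, hQ.1⟩, ⟨by omega, hQ.2⟩, rfl⟩
  · rintro ⟨⟨hi, hu⟩, ⟨hj, hv⟩, rfl⟩
    have hi : i + 2 * r ≤ u.length := by omega
    have hj : j + 2 * l ≤ v.length := by omega
    exact ⟨⟨hi, hj, congrFun (subarr_eq_outerArr hA hi hj).symm⟩,
      (isQuartic_outerArr_iff hr hl).2 ⟨hu, hv⟩⟩

theorem ncard_tandems_diagonal
    (hA : ∀ i < u.length, ∀ j < v.length, A i j = (u.getD i 0, v.getD j 0)) :
    {w : (r : ℕ) × (l : ℕ) × (Fin r × Fin l → Fin 2 × Fin 2) |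
      1 ≤ w.1 ∧ 1 ≤ w.2.1 ∧
      ∃ i j, i + 2 * w.1 ≤ u.length ∧ j + 2 * w.2.1 ≤ v.length ∧
        w.2.2 = subarr A i j w.1 w.2.1 ∧
        w.2.2 = subarr A (i + w.1) (j + w.2.1) w.1 w.2.1}.ncard =
      u.squareRoots.ncard * v.squareRoots.ncard := by
  rw [← ncard_squareWindows (fun a b r l => outerArr a b r l)
    (fun hx hy => outerArr_eq_of_prefix hx hy (by simp) (by simp))
    (fun hx hy hxlen hylen => eq_of_outerArr_append_self_eq hx hy hxlen hylen le_rfl le_rfl)]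
  congr 1
  ext ⟨r, l, X⟩
  simp only [squareWindows, Set.mem_ofPred_eq, hasSquarePrefix_iff_getD (0 : Fin 2), length_drop]
  refine and_congr_right fun hr => and_congr_right fun hl => exists₂_congr fun i j => ?_
  constructor
  · rintro ⟨hi, hj, rfl, hX⟩
    rw [subarr_eq_outerArr hA (i := i) (j := j) (by omega) (by omega),
      subarr_eq_outerArr hA (i := i + r) (j := j + l) (by omega) (by omega),
      ← drop_drop, ← drop_drop, outerArr_eq_outerArr_drop_iff hr hl] at hX
    exact ⟨⟨by omega, hX.1⟩, ⟨by omega, hX.2⟩, subarr_eq_outerArr hA (by omega) (by omega)⟩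
  · rintro ⟨⟨hi, hu⟩, ⟨hj, hv⟩, rfl⟩
    refine ⟨by omega, by omega, (subarr_eq_outerArr hA (by omega) (by omega)).symm, ?_⟩
    rw [subarr_eq_outerArr hA (by omega) (by omega), ← drop_drop, ← drop_drop]
    exact (outerArr_eq_outerArr_drop_iff hr hl).2 ⟨hu, hv⟩

theorem ncard_tandems_antidiagonal
    (hA : ∀ i < u.length, ∀ j < v.length, A i j = (u.getD i 0, v.getD j 0)) :
    {w : (r : ℕ) × (l : ℕ) × (Fin r × Fin l → Fin 2 × Fin 2) |
      1 ≤ w.1 ∧ 1 ≤ w.2.1 ∧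
      ∃ i j, i + 2 * w.1 ≤ u.length ∧ j + 2 * w.2.1 ≤ v.length ∧
        w.2.2 = subarr A i (j + w.2.1) w.1 w.2.1 ∧
        w.2.2 = subarr A (i + w.1) j w.1 w.2.1}.ncard =
      u.squareRoots.ncard * v.squareRoots.ncard := by
  rw [← ncard_squareWindows (fun a b r l => outerArr a b r l)
    (fun hx hy => outerArr_eq_of_prefix hx hy (by simp) (by simp))
    (fun hx hy hxlen hylen => eq_of_outerArr_append_self_eq hx hy hxlen hylen le_rfl le_rfl)]
  congr 1
  ext ⟨r, l, X⟩
  simp only [squareWindows, Set.mem_ofPred_eq, hasSquarePrefix_iff_getD (0 : Fin 2), length_drop]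
  refine and_congr_right fun hr => and_congr_right fun hl => exists₂_congr fun i j => ?_
  constructor
  · rintro ⟨hi, hj, rfl, hX⟩
    have e := subarr_eq_outerArr hA (i := i) (j := j + l) (r := r) (l := l) (by omega) (by omega)
    rw [e, subarr_eq_outerArr hA (by omega) (by omega), ← drop_drop, ← drop_drop] at hX
    obtain ⟨hu, hv⟩ := (outerArr_drop_right_eq_outerArr_drop_left_iff hr hl).1 hX
    refine ⟨⟨by omega, hu⟩, ⟨by omega, hv⟩, ?_⟩
    rw [e, ← drop_drop]
    exact outerArr_congr (fun _ _ => rfl) fun t ht => by rw [getD_drop, hv t ht]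
  · rintro ⟨⟨hi, hu⟩, ⟨hj, hv⟩, rfl⟩
    refine ⟨by omega, by omega, ?_, ?_⟩
    · rw [subarr_eq_outerArr hA (by omega) (by omega), ← drop_drop]
      exact outerArr_congr (fun _ _ => rfl) fun t ht => (hv t ht).trans (getD_drop _ _ _ _).symm
    · rw [subarr_eq_outerArr hA (by omega) (by omega), ← drop_drop]
      exact outerArr_congr (fun t ht => (hu t ht).trans (getD_drop _ _ _ _).symm) fun _ _ => rfl

end Counting

/-- For m,n ≥ 3, the number of distinct quartics occurring in f_{m,n}
(over all sizes (2r,2l), r,l ≥ 1: distinct 2r × 2l arrays X occurring in f_{m,n} whose four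
r × l quadrant blocks are all equal) is D(m)·D(n); consequently the numbers of distinct
Type II(a) tandems and of distinct Type II(b) tandems in f_{m,n} also equal D(m)·D(n). -/
theorem stmt10 (m n : ℕ) :
    ({x : (r : ℕ) × (l : ℕ) × (Fin (2 * r) × Fin (2 * l) → Fin 2 × Fin 2) |
      1 ≤ x.1 ∧ 1 ≤ x.2.1 ∧ occursIn m n (2 * x.1) (2 * x.2.1) x.2.2 ∧
      ∀ (p : Fin x.1) (q : Fin x.2.1),
        x.2.2 (⟨p.val, by have := p.isLt; omega⟩, ⟨q.val, by have := q.isLt; omega⟩)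
          = x.2.2 (⟨p.val, by have := p.isLt; omega⟩,
              ⟨q.val + x.2.1, by have := q.isLt; omega⟩) ∧
        x.2.2 (⟨p.val, by have := p.isLt; omega⟩, ⟨q.val, by have := q.isLt; omega⟩)
          = x.2.2 (⟨p.val + x.1, by have := p.isLt; omega⟩,
              ⟨q.val, by have := q.isLt; omega⟩) ∧
        x.2.2 (⟨p.val, by have := p.isLt; omega⟩, ⟨q.val, by have := q.isLt; omega⟩)
          = x.2.2 (⟨p.val + x.1, by have := p.isLt; omega⟩,
              ⟨q.val + x.2.1, by have := q.isLt; omega⟩)}.ncard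
      = D m * D n) ∧
    ({w : (r : ℕ) × (l : ℕ) × (Fin r × Fin l → Fin 2 × Fin 2) |
      1 ≤ w.1 ∧ 1 ≤ w.2.1 ∧
      ∃ i j, i + 2 * w.1 ≤ F m ∧ j + 2 * w.2.1 ≤ F n ∧
        w.2.2 = subarr (fibArr m n) i j w.1 w.2.1 ∧
        w.2.2 = subarr (fibArr m n) (i + w.1) (j + w.2.1) w.1 w.2.1}.ncard
      = D m * D n) ∧
    ({w : (r : ℕ) × (l : ℕ) × (Fin r × Fin l → Fin 2 × Fin 2) |
      1 ≤ w.1 ∧ 1 ≤ w.2.1 ∧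
      ∃ i j, i + 2 * w.1 ≤ F m ∧ j + 2 * w.2.1 ≤ F n ∧
        w.2.2 = subarr (fibArr m n) i (j + w.2.1) w.1 w.2.1 ∧
        w.2.2 = subarr (fibArr m n) (i + w.1) j w.1 w.2.1}.ncard
      = D m * D n) := by
  have hA : ∀ i < (fibWord m).length, ∀ j < (fibWord n).length,
      fibArr m n i j = ((fibWord m).getD i 0, (fibWord n).getD j 0) := fun i hi j hj =>
    fibArr_eq_getD m n i j (fibWord_length m ▸ hi) (fibWord_length n ▸ hj)
  have hQ := ncard_quartics hA
  have hT₁ := ncard_tandems_diagonal hA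
  have hT₂ := ncard_tandems_antidiagonal hA
  rw [fibWord_length, fibWord_length] at hQ hT₁ hT₂
  exact ⟨hQ, hT₁, hT₂⟩
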